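/- The Taylor coefficients of a geodesic at its initial point are determined by the initial velocity together with the partial derivatives of the immersion of orders up to the coefficient order. Precisely: let r and r̂ be two C^∞ immersions on U, let x and x̂ be geodesics of r and of r̂ respectively, both defined on an open interval I containing 0, with x(0) = x̂(0) = x₀ and x'(0) = x̂'(0). Fix k ≥ 1. If every iterated partial derivative of r of order between 1 and k agrees at x₀ with the corresponding iterated partial derivative of r̂, then the curves have the same derivatives at 0 up to order k: the j-th derivative of x at 0 equals the j-th derivative of x̂ at 0 for every 1 ≤ j ≤ k. -/

import Mathlib

open scoped RealInnerProductSpace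

/-- Partial derivative `∂f/∂x^i` of a map defined on `ℝ^n`. -/
noncomputable def pd {n : ℕ} {E : Type*} [NormedAddCommGroup E] [NormedSpace ℝ E]
    (i : Fin n) (f : (Fin n → ℝ) → E) : (Fin n → ℝ) → E :=
  fun x => fderiv ℝ f x (Pi.single i 1)

/-- Induced metric `g_{ij}(x) = ⟨r_i(x), r_j(x)⟩`. -/
noncomputable def metricG {n m : ℕ} (r : (Fin n → ℝ) → EuclideanSpace ℝ (Fin m))
    (x : Fin n → ℝ) : Matrix (Fin n) (Fin n) ℝ :=
  fun i j => ⟪pd i r x, pd j r x⟫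

/-- Contravariant (inverse) metric `g^{ij}(x)`. -/
noncomputable def invG {n m : ℕ} (r : (Fin n → ℝ) → EuclideanSpace ℝ (Fin m))
    (x : Fin n → ℝ) : Matrix (Fin n) (Fin n) ℝ :=
  (metricG r x)⁻¹

/-- Christoffel symbols of the second kind
`Γ^a_{ij}(x) = Σ_k ⟨r_{ij}(x), r_k(x)⟩ g^{ak}(x)`. -/
noncomputable def Christoffel {n m : ℕ} (r : (Fin n → ℝ) → EuclideanSpace ℝ (Fin m))
    (a i j : Fin n) (x : Fin n → ℝ) : ℝ :=
  ∑ k, ⟪pd i (pd j r) x, pd k r x⟫ * invG r x a k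

/-- Iterated partial derivative of a map on `ℝ^n` with respect to the list of
coordinate indices `l`. -/
noncomputable def iterPD {n m : ℕ} (l : List (Fin n))
    (r : (Fin n → ℝ) → EuclideanSpace ℝ (Fin m)) :
    (Fin n → ℝ) → EuclideanSpace ℝ (Fin m) :=
  l.foldr (fun i g => pd i g) r

/-- `x` is a geodesic of the immersion `r` on the interval `I`:
`d²x^a/dλ² + Σ_{i,j} Γ^a_{ij}(x(λ)) (dx^i/dλ)(dx^j/dλ) = 0`. -/
def IsGeodesicOn {n m : ℕ} (r : (Fin n → ℝ) → EuclideanSpace ℝ (Fin m))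
    (x : ℝ → (Fin n → ℝ)) (I : Set ℝ) : Prop :=
  ∀ t ∈ I, ∀ a : Fin n,
    deriv (deriv fun s => x s a) t +
      ∑ i, ∑ j, Christoffel r a i j (x t) *
        deriv (fun s => x s i) t * deriv (fun s => x s j) t = 0




noncomputable def itPD {n : ℕ} {E : Type*} [NormedAddCommGroup E] [NormedSpace ℝ E]
    (l : List (Fin n)) (f : (Fin n → ℝ) → E) : (Fin n → ℝ) → E :=
  l.foldr (fun i g => pd i g) f

variable {n m : ℕ} {E : Type*} [NormedAddCommGroup E] [NormedSpace ℝ E]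
variable {U : Set (Fin n → ℝ)}

lemma pd_congr (hU : IsOpen U) {f g : (Fin n → ℝ) → E} (h : Set.EqOn f g U) (i : Fin n) :
    Set.EqOn (pd i f) (pd i g) U := fun y hy => by
  have : f =ᶠ[nhds y] g := Filter.eventuallyEq_of_mem (hU.mem_nhds hy) h
  simp only [pd, this.fderiv_eq]

lemma itPD_congr (hU : IsOpen U) {f g : (Fin n → ℝ) → E} (h : Set.EqOn f g U)
    (l : List (Fin n)) : Set.EqOn (itPD l f) (itPD l g) U := by
  induction l with
  | nil => exact h
  | cons i l ih => exact pd_congr hU ih i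

lemma itPD_append (l₁ l₂ : List (Fin n)) (f : (Fin n → ℝ) → E) :
    itPD (l₁ ++ l₂) f = itPD l₁ (itPD l₂ f) := by
  simp [itPD, List.foldr_append]

lemma itPD_concat (l : List (Fin n)) (i : Fin n) (f : (Fin n → ℝ) → E) :
    itPD (l ++ [i]) f = itPD l (pd i f) := itPD_append l [i] f

lemma contDiffOn_pd (hU : IsOpen U) {f : (Fin n → ℝ) → E}
    (hf : ContDiffOn ℝ (⊤:ℕ∞) f U) (i : Fin n) : ContDiffOn ℝ (⊤:ℕ∞) (pd i f) U := by
  have h1 : ContDiffOn ℝ (⊤:ℕ∞) (fderiv ℝ f) U := by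
    apply hf.fderiv_of_isOpen hU
    exact le_of_eq (by norm_cast)
  exact (ContinuousLinearMap.apply ℝ E (Pi.single i 1)).contDiff.comp_contDiffOn h1

lemma differentiableAt_of_contDiffOn (hU : IsOpen U) {f : (Fin n → ℝ) → E}
    (hf : ContDiffOn ℝ (⊤:ℕ∞) f U) {y : Fin n → ℝ} (hy : y ∈ U) :
    DifferentiableAt ℝ f y :=
  (hf.differentiableOn (by norm_num)).differentiableAt (hU.mem_nhds hy)

lemma pd_add (hU : IsOpen U) {f g : (Fin n → ℝ) → ℝ}
    (hf : ContDiffOn ℝ (⊤:ℕ∞) f U) (hg : ContDiffOn ℝ (⊤:ℕ∞) g U) (i : Fin n) :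
    Set.EqOn (pd i (fun y => f y + g y)) (fun y => pd i f y + pd i g y) U := fun y hy => by
  simp only [pd]
  rw [fderiv_fun_add (differentiableAt_of_contDiffOn hU hf hy)
    (differentiableAt_of_contDiffOn hU hg hy)]
  rfl

lemma pd_mul (hU : IsOpen U) {f g : (Fin n → ℝ) → ℝ}
    (hf : ContDiffOn ℝ (⊤:ℕ∞) f U) (hg : ContDiffOn ℝ (⊤:ℕ∞) g U) (i : Fin n) :
    Set.EqOn (pd i (fun y => f y * g y))
      (fun y => pd i f y * g y + f y * pd i g y) U := fun y hy => by
  simp only [pd]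
  rw [fderiv_fun_mul (differentiableAt_of_contDiffOn hU hf hy)
    (differentiableAt_of_contDiffOn hU hg hy)]
  simp only [ContinuousLinearMap.add_apply, ContinuousLinearMap.coe_smul', Pi.smul_apply,
    smul_eq_mul]
  ring

lemma pd_const_mul (hU : IsOpen U) {f : (Fin n → ℝ) → ℝ} (c : ℝ)
    (hf : ContDiffOn ℝ (⊤:ℕ∞) f U) (i : Fin n) :
    Set.EqOn (pd i (fun y => c * f y)) (fun y => c * pd i f y) U := fun y hy => by
  simp only [pd]
  rw [fderiv_const_mul (differentiableAt_of_contDiffOn hU hf hy)]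
  rfl

lemma pd_inv (hU : IsOpen U) {f : (Fin n → ℝ) → ℝ}
    (hf : ContDiffOn ℝ (⊤:ℕ∞) f U) (hf0 : ∀ y ∈ U, f y ≠ 0) (i : Fin n) :
    Set.EqOn (pd i (fun y => (f y)⁻¹))
      (fun y => -(pd i f y * ((f y)⁻¹ * (f y)⁻¹))) U := fun y hy => by
  have hd := differentiableAt_of_contDiffOn hU hf hy
  have h := ((hasFDerivAt_inv' (𝕜 := ℝ) (hf0 y hy)).comp y hd.hasFDerivAt).fderiv
  rw [show Inv.inv ∘ f = fun y => (f y)⁻¹ from rfl] at h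
  simp only [pd, h, ContinuousLinearMap.coe_comp', Function.comp_apply,
    ContinuousLinearMap.neg_apply, ContinuousLinearMap.mulLeftRight_apply]
  ring
def GoodP {n : ℕ} (U : Set (Fin n → ℝ)) (x0 : Fin n → ℝ) (N : ℕ)
    (f f' : (Fin n → ℝ) → ℝ) : Prop :=
  ContDiffOn ℝ (⊤:ℕ∞) f U ∧ ContDiffOn ℝ (⊤:ℕ∞) f' U ∧
  ∀ l : List (Fin n), l.length ≤ N → itPD l f x0 = itPD l f' x0

variable {x0 : Fin n → ℝ} {N : ℕ} {f f' g g' : (Fin n → ℝ) → ℝ}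

lemma GoodP.mono {N' : ℕ} (h : GoodP U x0 N f f') (hN : N' ≤ N) : GoodP U x0 N' f f' :=
  ⟨h.1, h.2.1, fun l hl => h.2.2 l (hl.trans hN)⟩

lemma GoodP.val (h : GoodP U x0 N f f') : f x0 = f' x0 := by
  simpa [itPD] using h.2.2 [] (Nat.zero_le N)

lemma GoodP.congr (hU : IsOpen U) (hx0 : x0 ∈ U) (h : GoodP U x0 N f f')
    {f₁ f₁' : (Fin n → ℝ) → ℝ} (h1 : Set.EqOn f f₁ U) (h1' : Set.EqOn f' f₁' U) :
    GoodP U x0 N f₁ f₁' :=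
  ⟨h.1.congr fun y hy => (h1 hy).symm, h.2.1.congr fun y hy => (h1' hy).symm,
   fun l hl => by
    rw [← itPD_congr hU h1 l hx0, ← itPD_congr hU h1' l hx0]
    exact h.2.2 l hl⟩

lemma GoodP.pdStep (hU : IsOpen U) (h : GoodP U x0 (N+1) f f') (i : Fin n) :
    GoodP U x0 N (pd i f) (pd i f') := by
  refine ⟨contDiffOn_pd hU h.1 i, contDiffOn_pd hU h.2.1 i, fun l hl => ?_⟩
  rw [← itPD_concat, ← itPD_concat]
  exact h.2.2 (l ++ [i]) (by simp; omega)

lemma GoodP.of_pd (hf : ContDiffOn ℝ (⊤:ℕ∞) f U) (hf' : ContDiffOn ℝ (⊤:ℕ∞) f' U)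
    (h0 : f x0 = f' x0) (h : ∀ i, GoodP U x0 N (pd i f) (pd i f')) :
    GoodP U x0 (N+1) f f' := by
  refine ⟨hf, hf', fun l hl => ?_⟩
  rcases l.eq_nil_or_concat' with rfl | ⟨L, i, rfl⟩
  · exact h0
  · rw [itPD_concat, itPD_concat]
    exact (h i).2.2 L (by simp at hl ⊢; omega)

lemma GoodP.const (hx0 : x0 ∈ U) (c : ℝ) : GoodP U x0 N (fun _ => c) (fun _ => c) :=
  ⟨contDiffOn_const, contDiffOn_const, fun l _ => rfl⟩

lemma GoodP.add (hU : IsOpen U) (hx0 : x0 ∈ U) (hf : GoodP U x0 N f f')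
    (hg : GoodP U x0 N g g') :
    GoodP U x0 N (fun y => f y + g y) (fun y => f' y + g' y) := by
  induction N generalizing f f' g g' with
  | zero =>
    refine ⟨hf.1.add hg.1, hf.2.1.add hg.2.1, fun l hl => ?_⟩
    rw [List.length_eq_zero_iff.mp (Nat.le_zero.mp hl)]
    simp only [itPD, List.foldr_nil]
    rw [hf.val, hg.val]
  | succ N ih =>
    refine GoodP.of_pd (hf.1.add hg.1) (hf.2.1.add hg.2.1) (by rw [hf.val, hg.val]) fun i => ?_
    exact (ih (hf.pdStep hU i) (hg.pdStep hU i)).congr hU hx0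
      (pd_add hU hf.1 hg.1 i).symm (pd_add hU hf.2.1 hg.2.1 i).symm

lemma GoodP.const_mul (hU : IsOpen U) (hx0 : x0 ∈ U) (c : ℝ) (hf : GoodP U x0 N f f') :
    GoodP U x0 N (fun y => c * f y) (fun y => c * f' y) := by
  induction N generalizing f f' with
  | zero =>
    refine ⟨contDiffOn_const.mul hf.1, contDiffOn_const.mul hf.2.1, fun l hl => ?_⟩
    rw [List.length_eq_zero_iff.mp (Nat.le_zero.mp hl)]
    simp only [itPD, List.foldr_nil]
    rw [hf.val]
  | succ N ih =>
    refine GoodP.of_pd (contDiffOn_const.mul hf.1) (contDiffOn_const.mul hf.2.1)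
      (by rw [hf.val]) fun i => ?_
    exact (ih (hf.pdStep hU i)).congr hU hx0
      (pd_const_mul hU c hf.1 i).symm (pd_const_mul hU c hf.2.1 i).symm

lemma GoodP.mul (hU : IsOpen U) (hx0 : x0 ∈ U) (hf : GoodP U x0 N f f')
    (hg : GoodP U x0 N g g') :
    GoodP U x0 N (fun y => f y * g y) (fun y => f' y * g' y) := by
  induction N generalizing f f' g g' with
  | zero =>
    refine ⟨hf.1.mul hg.1, hf.2.1.mul hg.2.1, fun l hl => ?_⟩
    rw [List.length_eq_zero_iff.mp (Nat.le_zero.mp hl)]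
    simp only [itPD, List.foldr_nil]
    rw [hf.val, hg.val]
  | succ N ih =>
    refine GoodP.of_pd (hf.1.mul hg.1) (hf.2.1.mul hg.2.1) (by rw [hf.val, hg.val]) fun i => ?_
    refine GoodP.congr hU hx0 ?_ (pd_mul hU hf.1 hg.1 i).symm (pd_mul hU hf.2.1 hg.2.1 i).symm
    exact GoodP.add hU hx0
      (ih (hf.pdStep hU i) (hg.mono (by omega)))
      (ih (hf.mono (by omega)) (hg.pdStep hU i))

lemma GoodP.neg (hU : IsOpen U) (hx0 : x0 ∈ U) (hf : GoodP U x0 N f f') :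
    GoodP U x0 N (fun y => -(f y)) (fun y => -(f' y)) := by
  have := hf.const_mul hU hx0 (-1)
  simpa using this

lemma GoodP.sum (hU : IsOpen U) (hx0 : x0 ∈ U) {ι : Type*} (s : Finset ι)
    {F F' : ι → (Fin n → ℝ) → ℝ} (h : ∀ j ∈ s, GoodP U x0 N (F j) (F' j)) :
    GoodP U x0 N (fun y => ∑ j ∈ s, F j y) (fun y => ∑ j ∈ s, F' j y) := by
  classical
  induction s using Finset.induction with
  | empty => simpa using GoodP.const hx0 0
  | insert _ _ hj ih =>
    rename_i a s
    simp only [Finset.sum_insert hj]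
    exact GoodP.add hU hx0 (h a (by simp)) (ih fun j hjs => h j (by simp [hjs]))

lemma GoodP.prod (hU : IsOpen U) (hx0 : x0 ∈ U) {ι : Type*} (s : Finset ι)
    {F F' : ι → (Fin n → ℝ) → ℝ} (h : ∀ j ∈ s, GoodP U x0 N (F j) (F' j)) :
    GoodP U x0 N (fun y => ∏ j ∈ s, F j y) (fun y => ∏ j ∈ s, F' j y) := by
  classical
  induction s using Finset.induction with
  | empty => simpa using GoodP.const hx0 1
  | insert _ _ hj ih =>
    rename_i a s
    simp only [Finset.prod_insert hj]
    exact GoodP.mul hU hx0 (h a (by simp)) (ih fun j hjs => h j (by simp [hjs]))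

lemma GoodP.inv (hU : IsOpen U) (hx0 : x0 ∈ U) (hf : GoodP U x0 N f f')
    (hf0 : ∀ y ∈ U, f y ≠ 0) (hf0' : ∀ y ∈ U, f' y ≠ 0) :
    GoodP U x0 N (fun y => (f y)⁻¹) (fun y => (f' y)⁻¹) := by
  induction N generalizing f f' with
  | zero =>
    refine ⟨hf.1.inv hf0, hf.2.1.inv hf0', fun l hl => ?_⟩
    rw [List.length_eq_zero_iff.mp (Nat.le_zero.mp hl)]
    simp only [itPD, List.foldr_nil]
    rw [hf.val]
  | succ N ih =>
    refine GoodP.of_pd (hf.1.inv hf0) (hf.2.1.inv hf0') (by rw [hf.val]) fun i => ?_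
    refine GoodP.congr hU hx0 ?_ (pd_inv hU hf.1 hf0 i).symm (pd_inv hU hf.2.1 hf0' i).symm
    refine GoodP.neg hU hx0 ?_
    refine GoodP.mul hU hx0 (hf.pdStep hU i) ?_
    have hinv := ih (hf.mono (by omega)) hf0 hf0'
    exact GoodP.mul hU hx0 hinv hinv
-- Section C: atoms and vector-valued iterated partials

lemma contDiffOn_itPD (hU : IsOpen U) {F : (Fin n → ℝ) → E}
    (hF : ContDiffOn ℝ (⊤:ℕ∞) F U) (l : List (Fin n)) :
    ContDiffOn ℝ (⊤:ℕ∞) (itPD l F) U := by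
  induction l with
  | nil => exact hF
  | cons i l ih => exact contDiffOn_pd hU ih i

lemma pd_eval (hU : IsOpen U) {F : (Fin n → ℝ) → EuclideanSpace ℝ (Fin m)}
    (hF : ContDiffOn ℝ (⊤:ℕ∞) F U) (c : Fin m) (i : Fin n) :
    Set.EqOn (pd i (fun y => F y c)) (fun y => pd i F y c) U := fun y hy => by
  have hd := differentiableAt_of_contDiffOn hU hF hy
  have h := ((EuclideanSpace.proj (𝕜 := ℝ) c).hasFDerivAt.comp y hd.hasFDerivAt).fderiv
  have e : (fun y => F y c) = ⇑(EuclideanSpace.proj (𝕜 := ℝ) c) ∘ F := rfl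
  simp only [pd, e, h, ContinuousLinearMap.coe_comp', Function.comp_apply]
  rfl

lemma itPD_eval (hU : IsOpen U) {F : (Fin n → ℝ) → EuclideanSpace ℝ (Fin m)}
    (hF : ContDiffOn ℝ (⊤:ℕ∞) F U) (c : Fin m) (l : List (Fin n)) :
    Set.EqOn (itPD l (fun y => F y c)) (fun y => itPD l F y c) U := by
  induction l with
  | nil => exact fun y _ => rfl
  | cons i l ih =>
    intro y hy
    have h1 : itPD (i :: l) (fun y => F y c) y = pd i (itPD l fun y => F y c) y := rfl
    rw [h1, pd_congr hU ih i hy]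
    exact pd_eval hU (contDiffOn_itPD hU hF l) c i hy

-- the atoms
lemma GoodP.atom (hU : IsOpen U) {x0 : Fin n → ℝ} (hx0 : x0 ∈ U)
    {r r' : (Fin n → ℝ) → EuclideanSpace ℝ (Fin m)}
    (hr : ContDiffOn ℝ (⊤:ℕ∞) r U) (hr' : ContDiffOn ℝ (⊤:ℕ∞) r' U)
    {k : ℕ}
    (hders : ∀ l : List (Fin n), 1 ≤ l.length → l.length ≤ k → itPD l r x0 = itPD l r' x0)
    (l : List (Fin n)) (hl1 : 1 ≤ l.length) (hlk : l.length ≤ k) (c : Fin m) :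
    GoodP U x0 (k - l.length) (fun y => itPD l r y c) (fun y => itPD l r' y c) := by
  refine ⟨?_, ?_, fun l' hl' => ?_⟩
  · exact (EuclideanSpace.proj (𝕜 := ℝ) c).contDiff.comp_contDiffOn (contDiffOn_itPD hU hr l)
  · exact (EuclideanSpace.proj (𝕜 := ℝ) c).contDiff.comp_contDiffOn (contDiffOn_itPD hU hr' l)
  · rw [itPD_eval hU (contDiffOn_itPD hU hr l) c l' hx0,
      itPD_eval hU (contDiffOn_itPD hU hr' l) c l' hx0]
    have : itPD (l' ++ l) r x0 = itPD (l' ++ l) r' x0 := by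
      refine hders (l' ++ l) (by simp; omega) (by simp; omega)
    rw [← itPD_append, ← itPD_append]
    exact congrArg (fun v => v c) this
-- Section D: determinant closure, nondegeneracy, Christoffel jets

lemma GoodP.detC (hU : IsOpen U) {x0 : Fin n → ℝ} (hx0 : x0 ∈ U) {N : ℕ}
    {E E' : Fin n → Fin n → (Fin n → ℝ) → ℝ}
    (h : ∀ p q, GoodP U x0 N (E p q) (E' p q)) :
    GoodP U x0 N (fun y => (Matrix.of fun p q => E p q y).det)
      (fun y => (Matrix.of fun p q => E' p q y).det) := by
  have e : ∀ (E : Fin n → Fin n → (Fin n → ℝ) → ℝ),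
      (fun y => (Matrix.of fun p q => E p q y).det)
        = fun y => ∑ σ : Equiv.Perm (Fin n),
            ((Equiv.Perm.sign σ : ℤ) : ℝ) * ∏ p, E (σ p) p y := by
    intro E; funext y
    rw [Matrix.det_apply]
    simp [Units.smul_def, zsmul_eq_mul]
  rw [e E, e E']
  refine GoodP.sum hU hx0 _ fun σ _ => ?_
  exact GoodP.const_mul hU hx0 _ (GoodP.prod hU hx0 _ fun p _ => h (σ p) p)

-- metric entries expansion
lemma metricG_entry {r : (Fin n → ℝ) → EuclideanSpace ℝ (Fin m)} (p q : Fin n)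
    (y : Fin n → ℝ) : metricG r y p q = ∑ c, itPD [p] r y c * itPD [q] r y c := by
  simp [metricG, PiLp.inner_apply, RCLike.inner_apply, itPD]
  exact Finset.sum_congr rfl fun _ _ => mul_comm _ _

lemma GoodP.metricEntry (hU : IsOpen U) {x0 : Fin n → ℝ} (hx0 : x0 ∈ U)
    {r r' : (Fin n → ℝ) → EuclideanSpace ℝ (Fin m)}
    (hr : ContDiffOn ℝ (⊤:ℕ∞) r U) (hr' : ContDiffOn ℝ (⊤:ℕ∞) r' U)
    {k : ℕ} (hk : 1 ≤ k)
    (hders : ∀ l : List (Fin n), 1 ≤ l.length → l.length ≤ k → itPD l r x0 = itPD l r' x0)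
    (p q : Fin n) :
    GoodP U x0 (k - 1) (fun y => metricG r y p q) (fun y => metricG r' y p q) := by
  have e : ∀ (r : (Fin n → ℝ) → EuclideanSpace ℝ (Fin m)), (fun y => metricG r y p q)
      = fun y => ∑ c, itPD [p] r y c * itPD [q] r y c := by
    intro r; funext y; exact metricG_entry p q y
  rw [e r, e r']
  refine GoodP.sum hU hx0 _ fun c _ => ?_
  exact GoodP.mul hU hx0
    (GoodP.atom hU hx0 hr hr' hders [p] (by simp) (by simpa) c)
    (GoodP.atom hU hx0 hr hr' hders [q] (by simp) (by simpa) c)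

-- nondegeneracy of the metric
lemma det_metricG_ne_zero {r : (Fin n → ℝ) → EuclideanSpace ℝ (Fin m)}
    {y : Fin n → ℝ} (himm : Function.Injective (fderiv ℝ r y)) :
    (metricG r y).det ≠ 0 := by
  intro h0
  obtain ⟨v, hv, hMv⟩ := (Matrix.exists_mulVec_eq_zero_iff).mpr h0
  apply hv
  have h1 : fderiv ℝ r y v = ∑ p, v p • pd p r y := by
    have hv2 : v = ∑ p, v p • (Pi.single p 1 : Fin n → ℝ) := by
      funext q
      simp [Finset.sum_apply, Pi.single_apply, mul_comm]
    calc fderiv ℝ r y v = fderiv ℝ r y (∑ p, v p • (Pi.single p 1 : Fin n → ℝ)) := by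
          rw [← hv2]
      _ = ∑ p, v p • pd p r y := by
          rw [map_sum]
          simp [pd]
  have h2 : ⟪fderiv ℝ r y v, fderiv ℝ r y v⟫ = 0 := by
    rw [h1, inner_sum]
    have key : ∀ q, ⟪∑ p, v p • pd p r y, v q • pd q r y⟫ = v q * ((metricG r y).mulVec v q) := by
      intro q
      have hm : (metricG r y).mulVec v q = ∑ p, ⟪pd q r y, pd p r y⟫ * v p := by
        simp [Matrix.mulVec, dotProduct, metricG]
      rw [real_inner_smul_right,
        sum_inner Finset.univ (fun p => v p • pd p r y) (pd q r y), hm,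
        Finset.mul_sum, Finset.mul_sum]
      refine Finset.sum_congr rfl fun p _ => ?_
      rw [real_inner_smul_left, real_inner_comm]
      ring
    rw [Finset.sum_congr rfl fun q _ => key q]
    have hz : ∀ q, v q * ((metricG r y).mulVec v q) = 0 := by
      intro q
      rw [show (metricG r y).mulVec v q = 0 from congrFun hMv q, mul_zero]
    simp [hz]
  have hz : fderiv ℝ r y v = 0 := inner_self_eq_zero.mp h2
  have : fderiv ℝ r y v = fderiv ℝ r y 0 := by simpa using hz
  simpa using himm this

lemma GoodP.invGEntry (hU : IsOpen U) {x0 : Fin n → ℝ} (hx0 : x0 ∈ U)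
    {r r' : (Fin n → ℝ) → EuclideanSpace ℝ (Fin m)}
    (hr : ContDiffOn ℝ (⊤:ℕ∞) r U) (hr' : ContDiffOn ℝ (⊤:ℕ∞) r' U)
    (himm : ∀ y ∈ U, Function.Injective (fderiv ℝ r y))
    (himm' : ∀ y ∈ U, Function.Injective (fderiv ℝ r' y))
    {k : ℕ} (hk : 1 ≤ k)
    (hders : ∀ l : List (Fin n), 1 ≤ l.length → l.length ≤ k → itPD l r x0 = itPD l r' x0)
    (a c : Fin n) :
    GoodP U x0 (k - 1) (fun y => invG r y a c) (fun y => invG r' y a c) := by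
  have e : ∀ (r : (Fin n → ℝ) → EuclideanSpace ℝ (Fin m)), (fun y => invG r y a c)
      = fun y => ((metricG r y).det)⁻¹ * (metricG r y).adjugate a c := by
    intro r; funext y
    rw [show invG r y = (metricG r y)⁻¹ from rfl, Matrix.inv_def]
    simp [Ring.inverse_eq_inv', Matrix.smul_apply, smul_eq_mul]
  rw [e r, e r']
  have hdet : GoodP U x0 (k - 1) (fun y => (metricG r y).det)
      (fun y => (metricG r' y).det) :=
    GoodP.detC hU hx0 (E := fun p q y => metricG r y p q) (E' := fun p q y => metricG r' y p q)
      fun p q => GoodP.metricEntry hU hx0 hr hr' hk hders p q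
  have hadj : GoodP U x0 (k - 1) (fun y => (metricG r y).adjugate a c)
      (fun y => (metricG r' y).adjugate a c) := by
    have e2 : ∀ (r : (Fin n → ℝ) → EuclideanSpace ℝ (Fin m)),
        (fun y => (metricG r y).adjugate a c)
        = fun y => (Matrix.of fun p q =>
            (fun p q y => if p = c then (Pi.single a 1 : Fin n → ℝ) q
              else metricG r y p q) p q y).det := by
      intro r; funext y
      rw [Matrix.adjugate_apply]
      congr 1
      funext p q
      rw [Matrix.updateRow_apply]
      simp
    rw [e2 r, e2 r']
    refine GoodP.detC hU hx0 fun p q => ?_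
    by_cases hp : p = c
    · simpa [hp] using GoodP.const (U := U) (x0 := x0) (N := k - 1)
        hx0 ((Pi.single a 1 : Fin n → ℝ) q)
    · simpa [hp] using GoodP.metricEntry hU hx0 hr hr' hk hders p q
  refine GoodP.mul hU hx0 ?_ hadj
  exact GoodP.inv hU hx0 hdet
    (fun y hy => det_metricG_ne_zero (himm y hy))
    (fun y hy => det_metricG_ne_zero (himm' y hy))

lemma GoodP.christoffel (hU : IsOpen U) {x0 : Fin n → ℝ} (hx0 : x0 ∈ U)
    {r r' : (Fin n → ℝ) → EuclideanSpace ℝ (Fin m)}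
    (hr : ContDiffOn ℝ (⊤:ℕ∞) r U) (hr' : ContDiffOn ℝ (⊤:ℕ∞) r' U)
    (himm : ∀ y ∈ U, Function.Injective (fderiv ℝ r y))
    (himm' : ∀ y ∈ U, Function.Injective (fderiv ℝ r' y))
    {k : ℕ} (hk2 : 2 ≤ k)
    (hders : ∀ l : List (Fin n), 1 ≤ l.length → l.length ≤ k → itPD l r x0 = itPD l r' x0)
    (a i j : Fin n) :
    GoodP U x0 (k - 2) (fun y => Christoffel r a i j y)
      (fun y => Christoffel r' a i j y) := by
  have e : ∀ (r : (Fin n → ℝ) → EuclideanSpace ℝ (Fin m)), (fun y => Christoffel r a i j y)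
      = fun y => ∑ kk, (∑ c, itPD [i, j] r y c * itPD [kk] r y c) * invG r y a kk := by
    intro r; funext y
    rw [show Christoffel r a i j y = ∑ kk, ⟪pd i (pd j r) y, pd kk r y⟫ * invG r y a kk
      from rfl]
    refine Finset.sum_congr rfl fun kk _ => ?_
    have h2 : ⟪pd i (pd j r) y, pd kk r y⟫ = ∑ c, itPD [i, j] r y c * itPD [kk] r y c := by
      simp [PiLp.inner_apply, RCLike.inner_apply, itPD]
      exact Finset.sum_congr rfl fun _ _ => mul_comm _ _
    rw [h2]
  rw [e r, e r']
  refine GoodP.sum hU hx0 _ fun kk _ => ?_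
  refine GoodP.mul hU hx0 ?_
    ((GoodP.invGEntry hU hx0 hr hr' himm himm' (by omega) hders a kk).mono (by omega))
  refine GoodP.sum hU hx0 _ fun c _ => ?_
  refine GoodP.mul hU hx0 ?_ ?_
  · exact GoodP.atom hU hx0 hr hr' hders [i, j] (by simp) (by simp; omega) c
  · exact (GoodP.atom hU hx0 hr hr' hders [kk] (by simp) (by simp; omega) c).mono
      (by simp; omega)
-- Section E: time side

section Time

variable {I : Set ℝ}

lemma deriv_congrOn {F : Type*} [NormedAddCommGroup F] [NormedSpace ℝ F]
    (hI : IsOpen I) {u v : ℝ → F} (h : Set.EqOn u v I) :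
    Set.EqOn (deriv u) (deriv v) I := fun t ht =>
  Filter.EventuallyEq.deriv_eq (Filter.eventuallyEq_of_mem (hI.mem_nhds ht) h)

lemma iteratedDeriv_congrOn {F : Type*} [NormedAddCommGroup F] [NormedSpace ℝ F]
    (hI : IsOpen I) {u v : ℝ → F} (h : Set.EqOn u v I) (p : ℕ) :
    Set.EqOn (iteratedDeriv p u) (iteratedDeriv p v) I := by
  induction p generalizing u v with
  | zero => simpa [iteratedDeriv_zero] using h
  | succ p ih =>
    rw [iteratedDeriv_succ', iteratedDeriv_succ']
    exact ih (deriv_congrOn hI h)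

lemma contDiffOn_deriv (hI : IsOpen I) {u : ℝ → ℝ} (hu : ContDiffOn ℝ (⊤:ℕ∞) u I) :
    ContDiffOn ℝ (⊤:ℕ∞) (deriv u) I := by
  have := (contDiffOn_infty_iff_deriv_of_isOpen hI).mp (by exact_mod_cast hu)
  exact_mod_cast this.2

lemma differentiableAt_of_contDiffOn_t (hI : IsOpen I) {F : Type*} [NormedAddCommGroup F]
    [NormedSpace ℝ F] {u : ℝ → F} (hu : ContDiffOn ℝ (⊤:ℕ∞) u I) {t : ℝ} (ht : t ∈ I) :
    DifferentiableAt ℝ u t :=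
  (hu.differentiableOn (by norm_num)).differentiableAt (hI.mem_nhds ht)

def GoodT (I : Set ℝ) (N : ℕ) (u u' : ℝ → ℝ) : Prop :=
  ContDiffOn ℝ (⊤:ℕ∞) u I ∧ ContDiffOn ℝ (⊤:ℕ∞) u' I ∧
  ∀ p ≤ N, iteratedDeriv p u 0 = iteratedDeriv p u' 0

variable {N : ℕ} {u u' v v' : ℝ → ℝ}

lemma GoodT.mono {N' : ℕ} (h : GoodT I N u u') (hN : N' ≤ N) : GoodT I N' u u' :=
  ⟨h.1, h.2.1, fun p hp => h.2.2 p (hp.trans hN)⟩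

lemma GoodT.val (h : GoodT I N u u') : u 0 = u' 0 := by
  simpa [iteratedDeriv_zero] using h.2.2 0 (Nat.zero_le N)

lemma GoodT.congr (hI : IsOpen I) (h0 : (0:ℝ) ∈ I) (h : GoodT I N u u')
    {u₁ u₁' : ℝ → ℝ} (h1 : Set.EqOn u u₁ I) (h1' : Set.EqOn u' u₁' I) :
    GoodT I N u₁ u₁' :=
  ⟨h.1.congr fun t ht => (h1 ht).symm, h.2.1.congr fun t ht => (h1' ht).symm,
   fun p hp => by
    rw [← iteratedDeriv_congrOn hI h1 p h0, ← iteratedDeriv_congrOn hI h1' p h0]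
    exact h.2.2 p hp⟩

lemma GoodT.derivStep (hI : IsOpen I) (h : GoodT I (N+1) u u') :
    GoodT I N (deriv u) (deriv u') := by
  refine ⟨contDiffOn_deriv hI h.1, contDiffOn_deriv hI h.2.1, fun p hp => ?_⟩
  rw [← iteratedDeriv_succ', ← iteratedDeriv_succ']
  exact h.2.2 (p+1) (by omega)

lemma GoodT.of_deriv (hu : ContDiffOn ℝ (⊤:ℕ∞) u I) (hu' : ContDiffOn ℝ (⊤:ℕ∞) u' I)
    (h0 : u 0 = u' 0) (h : GoodT I N (deriv u) (deriv u')) :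
    GoodT I (N+1) u u' := by
  refine ⟨hu, hu', fun p hp => ?_⟩
  cases p with
  | zero => simpa [iteratedDeriv_zero] using h0
  | succ q =>
    rw [iteratedDeriv_succ', iteratedDeriv_succ']
    exact h.2.2 q (by omega)

lemma GoodT.const (c : ℝ) : GoodT I N (fun _ => c) (fun _ => c) :=
  ⟨contDiffOn_const, contDiffOn_const, fun p _ => rfl⟩

lemma GoodT.add (hI : IsOpen I) (h0I : (0:ℝ) ∈ I) (hu : GoodT I N u u')
    (hv : GoodT I N v v') :
    GoodT I N (fun t => u t + v t) (fun t => u' t + v' t) := by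
  induction N generalizing u u' v v' with
  | zero =>
    refine ⟨hu.1.add hv.1, hu.2.1.add hv.2.1, fun p hp => ?_⟩
    rw [Nat.le_zero.mp hp]
    simp only [iteratedDeriv_zero]
    rw [hu.val, hv.val]
  | succ N ih =>
    refine GoodT.of_deriv (hu.1.add hv.1) (hu.2.1.add hv.2.1) (by rw [hu.val, hv.val]) ?_
    have e : ∀ (u v : ℝ → ℝ), ContDiffOn ℝ (⊤:ℕ∞) u I → ContDiffOn ℝ (⊤:ℕ∞) v I →
        Set.EqOn (deriv (fun t => u t + v t)) (fun t => deriv u t + deriv v t) I := by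
      intro u v hu hv t ht
      exact deriv_add (differentiableAt_of_contDiffOn_t hI hu ht)
        (differentiableAt_of_contDiffOn_t hI hv ht)
    refine GoodT.congr hI h0I ?_ (e u v hu.1 hv.1).symm (e u' v' hu.2.1 hv.2.1).symm
    exact ih (hu.derivStep hI) (hv.derivStep hI)

lemma GoodT.const_mul (hI : IsOpen I) (h0I : (0:ℝ) ∈ I) (c : ℝ) (hu : GoodT I N u u') :
    GoodT I N (fun t => c * u t) (fun t => c * u' t) := by
  induction N generalizing u u' with
  | zero =>
    refine ⟨contDiffOn_const.mul hu.1, contDiffOn_const.mul hu.2.1, fun p hp => ?_⟩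
    rw [Nat.le_zero.mp hp]
    simp only [iteratedDeriv_zero]
    rw [hu.val]
  | succ N ih =>
    refine GoodT.of_deriv (contDiffOn_const.mul hu.1) (contDiffOn_const.mul hu.2.1)
      (by rw [hu.val]) ?_
    have e : ∀ (u : ℝ → ℝ), ContDiffOn ℝ (⊤:ℕ∞) u I →
        Set.EqOn (deriv (fun t => c * u t)) (fun t => c * deriv u t) I := by
      intro u hu t ht
      exact deriv_const_mul c (differentiableAt_of_contDiffOn_t hI hu ht)
    refine GoodT.congr hI h0I ?_ (e u hu.1).symm (e u' hu.2.1).symm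
    exact ih (hu.derivStep hI)

lemma GoodT.neg (hI : IsOpen I) (h0I : (0:ℝ) ∈ I) (hu : GoodT I N u u') :
    GoodT I N (fun t => -(u t)) (fun t => -(u' t)) := by
  have := hu.const_mul hI h0I (-1)
  simpa using this

lemma GoodT.mul (hI : IsOpen I) (h0I : (0:ℝ) ∈ I) (hu : GoodT I N u u')
    (hv : GoodT I N v v') :
    GoodT I N (fun t => u t * v t) (fun t => u' t * v' t) := by
  induction N generalizing u u' v v' with
  | zero =>
    refine ⟨hu.1.mul hv.1, hu.2.1.mul hv.2.1, fun p hp => ?_⟩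
    rw [Nat.le_zero.mp hp]
    simp only [iteratedDeriv_zero]
    rw [hu.val, hv.val]
  | succ N ih =>
    refine GoodT.of_deriv (hu.1.mul hv.1) (hu.2.1.mul hv.2.1) (by rw [hu.val, hv.val]) ?_
    have e : ∀ (u v : ℝ → ℝ), ContDiffOn ℝ (⊤:ℕ∞) u I → ContDiffOn ℝ (⊤:ℕ∞) v I →
        Set.EqOn (deriv (fun t => u t * v t))
          (fun t => deriv u t * v t + u t * deriv v t) I := by
      intro u v hu hv t ht
      exact deriv_mul (differentiableAt_of_contDiffOn_t hI hu ht)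
        (differentiableAt_of_contDiffOn_t hI hv ht)
    refine GoodT.congr hI h0I ?_ (e u v hu.1 hv.1).symm (e u' v' hu.2.1 hv.2.1).symm
    exact GoodT.add hI h0I
      (ih (hu.derivStep hI) (hv.mono (by omega)))
      (ih (hu.mono (by omega)) (hv.derivStep hI))

lemma GoodT.sum (hI : IsOpen I) (h0I : (0:ℝ) ∈ I) {ι : Type*} (s : Finset ι)
    {F F' : ι → ℝ → ℝ} (h : ∀ j ∈ s, GoodT I N (F j) (F' j)) :
    GoodT I N (fun t => ∑ j ∈ s, F j t) (fun t => ∑ j ∈ s, F' j t) := by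
  classical
  induction s using Finset.induction with
  | empty => simpa using GoodT.const (I := I) (N := N) 0
  | insert _ _ hj ih =>
    rename_i c s
    simp only [Finset.sum_insert hj]
    exact GoodT.add hI h0I (h c (by simp)) (ih fun j hjs => h j (by simp [hjs]))

end Time
-- Section F: chain rule and composition

section Chain

variable {I : Set ℝ}

lemma chainRuleOn (hI : IsOpen I) (hU : IsOpen U) {x : ℝ → (Fin n → ℝ)}
    (hx : ContDiffOn ℝ (⊤:ℕ∞) x I) (hxU : ∀ t ∈ I, x t ∈ U)
    {f : (Fin n → ℝ) → ℝ} (hf : ContDiffOn ℝ (⊤:ℕ∞) f U) :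
    Set.EqOn (deriv (fun t => f (x t)))
      (fun t => ∑ i, pd i f (x t) * deriv (fun s => x s i) t) I := by
  intro t ht
  have hxd : DifferentiableAt ℝ x t := differentiableAt_of_contDiffOn_t hI hx ht
  have hfd : DifferentiableAt ℝ f (x t) := differentiableAt_of_contDiffOn hU hf (hxU t ht)
  have hx' : HasDerivAt x (deriv x t) t := hxd.hasDerivAt
  have hcomp : HasDerivAt (fun t => f (x t)) (fderiv ℝ f (x t) (deriv x t)) t :=
    hfd.hasFDerivAt.comp_hasDerivAt t hx'
  rw [hcomp.deriv]
  have hci : ∀ i, deriv (fun s => x s i) t = deriv x t i := fun i =>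
    ((ContinuousLinearMap.proj (R := ℝ) (φ := fun _ : Fin n => ℝ)
      i).hasFDerivAt.comp_hasDerivAt t hx').deriv
  have hvsum : deriv x t = ∑ p, deriv x t p • (Pi.single p 1 : Fin n → ℝ) := by
    funext q
    simp [Finset.sum_apply, Pi.single_apply, mul_comm]
  conv_lhs => rw [hvsum]
  rw [map_sum]
  refine Finset.sum_congr rfl fun i _ => ?_
  rw [map_smul, hci i]
  simp [pd, mul_comm]

lemma GoodT.comp (hI : IsOpen I) (h0I : (0:ℝ) ∈ I) (hU : IsOpen U)
    {x x' : ℝ → (Fin n → ℝ)}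
    (hx : ContDiffOn ℝ (⊤:ℕ∞) x I) (hx' : ContDiffOn ℝ (⊤:ℕ∞) x' I)
    (hxU : ∀ t ∈ I, x t ∈ U) (hx'U : ∀ t ∈ I, x' t ∈ U)
    (hx0 : x 0 = x' 0) {N : ℕ}
    (hX : ∀ c : Fin n, ∀ p ≤ N,
      iteratedDeriv p (fun s => x s c) 0 = iteratedDeriv p (fun s => x' s c) 0)
    {f f' : (Fin n → ℝ) → ℝ} (hf : GoodP U (x 0) N f f') :
    GoodT I N (fun t => f (x t)) (fun t => f' (x' t)) := by
  induction N generalizing f f' with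
  | zero =>
    refine ⟨hf.1.comp hx fun t ht => hxU t ht, hf.2.1.comp hx' fun t ht => hx'U t ht,
      fun p hp => ?_⟩
    rw [Nat.le_zero.mp hp]
    simp only [iteratedDeriv_zero]
    rw [← hx0, hf.val]
  | succ N ih =>
    refine GoodT.of_deriv (hf.1.comp hx fun t ht => hxU t ht)
      (hf.2.1.comp hx' fun t ht => hx'U t ht) (by rw [← hx0, hf.val]) ?_
    refine GoodT.congr hI h0I ?_ (chainRuleOn hI hU hx hxU hf.1).symm
      (chainRuleOn hI hU hx' hx'U hf.2.1).symm
    refine GoodT.sum hI h0I _ fun i _ => ?_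
    refine GoodT.mul hI h0I ?_ ?_
    · exact ih (fun c p hp => hX c p (by omega)) (hf.pdStep hU i)
    · refine ⟨contDiffOn_deriv hI (contDiffOn_pi.mp hx i),
        contDiffOn_deriv hI (contDiffOn_pi.mp hx' i), fun p hp => ?_⟩
      rw [← iteratedDeriv_succ', ← iteratedDeriv_succ']
      exact hX i (p+1) (by omega)

end Chain

/-- The Taylor coefficients of a geodesic at its initial point are determined by the
initial velocity together with the partial derivatives of the immersion of orders up to
the coefficient order: if two smooth immersions have the same iterated partial
derivatives of all orders `1, …, k` at the common initial point of two geodesics with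
the same initial velocity, then the geodesics have the same derivatives at `0` up to
order `k`. -/
theorem stmt16 {n m : ℕ} (U : Set (Fin n → ℝ)) (hU : IsOpen U)
    (r r' : (Fin n → ℝ) → EuclideanSpace ℝ (Fin m))
    (hr : ContDiffOn ℝ (⊤ : ℕ∞) r U) (hr' : ContDiffOn ℝ (⊤ : ℕ∞) r' U)
    (himm : ∀ x ∈ U, Function.Injective (fderiv ℝ r x))
    (himm' : ∀ x ∈ U, Function.Injective (fderiv ℝ r' x))
    (a b : ℝ) (ha : a < 0) (hb : 0 < b)
    (x x' : ℝ → (Fin n → ℝ))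
    (hx : ContDiffOn ℝ (⊤ : ℕ∞) x (Set.Ioo a b)) (hx' : ContDiffOn ℝ (⊤ : ℕ∞) x' (Set.Ioo a b))
    (hxU : ∀ t ∈ Set.Ioo a b, x t ∈ U) (hx'U : ∀ t ∈ Set.Ioo a b, x' t ∈ U)
    (hgeo : IsGeodesicOn r x (Set.Ioo a b))
    (hgeo' : IsGeodesicOn r' x' (Set.Ioo a b))
    (hx0 : x 0 = x' 0)
    (hv0 : ∀ c : Fin n, deriv (fun s => x s c) 0 = deriv (fun s => x' s c) 0)
    (k : ℕ) (hk : 1 ≤ k)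
    (hders : ∀ l : List (Fin n), 1 ≤ l.length → l.length ≤ k →
      iterPD l r (x 0) = iterPD l r' (x 0)) :
    ∀ j : ℕ, 1 ≤ j → j ≤ k → ∀ c : Fin n,
      iteratedDeriv j (fun s => x s c) 0 = iteratedDeriv j (fun s => x' s c) 0 := by
  set I : Set ℝ := Set.Ioo a b with hI_def
  have hI : IsOpen I := isOpen_Ioo
  have h0I : (0:ℝ) ∈ I := ⟨ha, hb⟩
  have hx0U : x 0 ∈ U := hxU 0 h0I
  -- downgrade smoothness to C^∞
  have hrS : ContDiffOn ℝ (⊤:ℕ∞) r U := hr.of_le (by simp)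
  have hr'S : ContDiffOn ℝ (⊤:ℕ∞) r' U := hr'.of_le (by simp)
  have hxS : ContDiffOn ℝ (⊤:ℕ∞) x I := hx.of_le (by simp)
  have hx'S : ContDiffOn ℝ (⊤:ℕ∞) x' I := hx'.of_le (by simp)
  have hdersI : ∀ l : List (Fin n), 1 ≤ l.length → l.length ≤ k →
      itPD l r (x 0) = itPD l r' (x 0) := hders
  -- the key statement by strong induction
  have H : ∀ j : ℕ, j ≤ k → ∀ c : Fin n, ∀ p ≤ j,
      iteratedDeriv p (fun s => x s c) 0 = iteratedDeriv p (fun s => x' s c) 0 := by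
    intro j
    induction j with
    | zero =>
      intro _ c p hp
      rw [Nat.le_zero.mp hp]
      simp only [iteratedDeriv_zero]
      rw [hx0]
    | succ j ih =>
      intro hjk c p hp
      rcases Nat.lt_or_ge p (j+1) with h | h
      · exact ih (by omega) c p (by omega)
      have hpj : p = j + 1 := by omega
      subst hpj
      cases j with
      | zero =>
        simp only [show (0:ℕ)+1 = 1 from rfl, iteratedDeriv_one]
        exact hv0 c
      | succ q =>
        have hk2 : 2 ≤ k := by omega
        simp only [iteratedDeriv_succ']
        -- Goodness of the geodesic RHS
        have hXq : ∀ c : Fin n, ∀ p ≤ q,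
            iteratedDeriv p (fun s => x s c) 0 = iteratedDeriv p (fun s => x' s c) 0 :=
          fun c p hpq => ih (by omega) c p (by omega)
        have hdT : ∀ i : Fin n, GoodT I q (deriv (fun s => x s i)) (deriv (fun s => x' s i)) := by
          intro i
          refine ⟨contDiffOn_deriv hI (contDiffOn_pi.mp hxS i),
            contDiffOn_deriv hI (contDiffOn_pi.mp hx'S i), fun p hpq => ?_⟩
          rw [← iteratedDeriv_succ', ← iteratedDeriv_succ']
          exact ih (by omega) i (p+1) (by omega)
        have key : GoodT I q
            (fun t => -∑ i, ∑ jj, Christoffel r c i jj (x t) *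
              deriv (fun s => x s i) t * deriv (fun s => x s jj) t)
            (fun t => -∑ i, ∑ jj, Christoffel r' c i jj (x' t) *
              deriv (fun s => x' s i) t * deriv (fun s => x' s jj) t) := by
          refine GoodT.neg hI h0I ?_
          refine GoodT.sum hI h0I _ fun i _ => ?_
          refine GoodT.sum hI h0I _ fun jj _ => ?_
          refine GoodT.mul hI h0I (GoodT.mul hI h0I ?_ (hdT i)) (hdT jj)
          exact GoodT.comp hI h0I hU hxS hx'S hxU hx'U hx0 hXq
            ((GoodP.christoffel hU hx0U hrS hr'S himm himm' hk2 hdersI c i jj).mono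
              (by omega))
        have hgeoEq : Set.EqOn (deriv (deriv fun s => x s c))
            (fun t => -∑ i, ∑ jj, Christoffel r c i jj (x t) *
              deriv (fun s => x s i) t * deriv (fun s => x s jj) t) I := by
          intro t ht
          have := hgeo t ht c
          simp only
          linarith
        have hgeoEq' : Set.EqOn (deriv (deriv fun s => x' s c))
            (fun t => -∑ i, ∑ jj, Christoffel r' c i jj (x' t) *
              deriv (fun s => x' s i) t * deriv (fun s => x' s jj) t) I := by
          intro t ht
          have := hgeo' t ht c
          simp only
          linarith
        calc iteratedDeriv q (deriv (deriv fun s => x s c)) 0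
            = iteratedDeriv q (fun t => -∑ i, ∑ jj, Christoffel r c i jj (x t) *
                deriv (fun s => x s i) t * deriv (fun s => x s jj) t) 0 :=
              iteratedDeriv_congrOn hI hgeoEq q h0I
          _ = iteratedDeriv q (fun t => -∑ i, ∑ jj, Christoffel r' c i jj (x' t) *
                deriv (fun s => x' s i) t * deriv (fun s => x' s jj) t) 0 :=
              key.2.2 q le_rfl
          _ = iteratedDeriv q (deriv (deriv fun s => x' s c)) 0 :=
              (iteratedDeriv_congrOn hI hgeoEq' q h0I).symm
  intro j hj1 hjk c
  exact H j hjk c j le_rfl
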